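/- arXiv:1710.10119 — 3 statements merged into one kernel-verified Lean document; each statement's English description precedes it below -/
import Mathlib

section
/- Let H be a complex Hilbert space and A a densely defined symmetric linear operator in H with domain D = Dom A. Suppose there exist bounded linear operators Q and S on H such that: (i) for every v ∈ D, Qv ∈ D and A(Qv) = v − Sv; (ii) Q*(D) ⊆ D and the operator D ∋ v ↦ A(Q*v) extends to a bounded operator on H; (iii) S*(D) ⊆ D and the operator D ∋ v ↦ A(S*v) extends to a bounded operator on H. Then A is essentially self-adjoint: its closure A̅ is self-adjoint, and A* = A̅. -/
/-!
A densely defined symmetric `A` satisfies `A ⊆ Ā ⊆ A†`, so only `A† ⊆ Ā` needs proof. Pairing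
`A Q = 1 - S` against `u ∈ Dom A†` gives `u = S* u + Q* (A† u)`. By (ii) and (iii), the graph of
`Ā`, being closed, contains `(S* w, C w)` and `(Q* w, B w)` for every `w`, so `u ∈ Dom Ā`. Finally
`Ā† = A† = Ā`, since an operator and its closure have the same adjoint.
-/

open scoped InnerProductSpace

namespace LinearPMap

section Closure

variable {R E F G : Type*} [CommRing R] [TopologicalSpace R]
  [AddCommGroup E] [Module R E] [TopologicalSpace E] [ContinuousAdd E] [ContinuousSMul R E]
  [AddCommGroup F] [Module R F] [TopologicalSpace F] [ContinuousAdd F] [ContinuousSMul R F]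

theorem closure_le_of_le_of_isClosed {f g : E →ₗ.[R] F} (hg : g.IsClosed) (h : f ≤ g) :
    f.closure ≤ g := by
  refine le_of_le_graph ?_
  rw [← (hg.isClosable.leIsClosable h).graph_closure_eq_closure_graph]
  exact Submodule.topologicalClosure_minimal _ (le_graph_of_le h) hg

theorem IsClosable.mem_graph_closure_of_dense [AddCommGroup G] [Module R G] [TopologicalSpace G]
    {f : E →ₗ.[R] F} (hf : f.IsClosable) {p : Submodule R G} (hp : Dense (p : Set G))
    {P : G → E} {T : G → F} (hP : Continuous P) (hT : Continuous T)
    (hPf : ∀ v : p, P v ∈ f.domain) (hTf : ∀ v : p, f ⟨P v, hPf v⟩ = T v) (w : G) :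
    (P w, T w) ∈ f.closure.graph := by
  rw [← hf.graph_closure_eq_closure_graph, ← SetLike.mem_coe, Submodule.topologicalClosure_coe]
  refine map_mem_closure (f := fun v => (P v, T v)) (hP.prodMk hT) (hp w) fun v hv => ?_
  simpa [hTf ⟨v, hv⟩] using f.mem_graph ⟨P v, hPf ⟨v, hv⟩⟩

end Closure

section Adjoint

variable {𝕜 E F : Type*} [RCLike 𝕜] [NormedAddCommGroup E] [InnerProductSpace 𝕜 E]
  [NormedAddCommGroup F] [InnerProductSpace 𝕜 F]

theorem IsFormalAdjoint.closure {T : E →ₗ.[𝕜] F} {S : F →ₗ.[𝕜] E} (h : T.IsFormalAdjoint S) :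
    T.closure.IsFormalAdjoint S := by
  by_cases hT : T.IsClosable
  swap
  · rwa [closure_def' hT]
  intro x y
  have hsub : (T.graph : Set (E × F)) ⊆ {p | ⟪p.2, (y : F)⟫_𝕜 = ⟪p.1, S y⟫_𝕜} := by
    rintro ⟨a, b⟩ hab
    obtain ⟨u, rfl, rfl⟩ := T.mem_graph_iff.mp hab
    exact h u y
  have hclosed : _root_.IsClosed {p : E × F | ⟪p.2, (y : F)⟫_𝕜 = ⟪p.1, S y⟫_𝕜} :=
    isClosed_eq (continuous_snd.inner continuous_const) (continuous_fst.inner continuous_const)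
  have hx := T.closure.mem_graph x
  rw [← hT.graph_closure_eq_closure_graph, ← SetLike.mem_coe,
    Submodule.topologicalClosure_coe] at hx
  exact closure_minimal hsub hclosed hx

variable [CompleteSpace E]

theorem adjoint_anti {S T : E →ₗ.[𝕜] F} (hS : Dense (S.domain : Set E)) (h : S ≤ T) :
    T† ≤ S† :=
  IsFormalAdjoint.le_adjoint hS fun x y => by
    rw [← (adjoint_isFormalAdjoint (hS.mono h.1)).symm ⟨x, h.1 x.2⟩ y]
    exact congrArg (⟪·, (y : F)⟫_𝕜) (h.2 rfl)

theorem adjoint_closure {T : E →ₗ.[𝕜] F} (hT : Dense (T.domain : Set E)) : T.closure† = T† :=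
  le_antisymm (adjoint_anti hT T.le_closure)
    ((adjoint_isFormalAdjoint hT).symm.closure.le_adjoint (hT.mono T.le_closure.1))

theorem IsFormalAdjoint.closure_le_adjoint {A : E →ₗ.[𝕜] E} (hA : Dense (A.domain : Set E))
    (h : A.IsFormalAdjoint A) : A.closure ≤ A† :=
  closure_le_of_le_of_isClosed (adjoint_isClosed hA) (h.le_adjoint hA)

theorem IsFormalAdjoint.isClosable {A : E →ₗ.[𝕜] E} (hA : Dense (A.domain : Set E))
    (h : A.IsFormalAdjoint A) : A.IsClosable :=
  isClosable_iff_exists_closed_extension.mpr ⟨A†, adjoint_isClosed hA, h.le_adjoint hA⟩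

theorem eq_adjoint_add_adjoint_of_parametrix {A : E →ₗ.[𝕜] E} (hA : Dense (A.domain : Set E))
    {Q S : E →L[𝕜] E} (hQ : ∀ v : A.domain, Q v ∈ A.domain)
    (hAQ : ∀ v : A.domain, A ⟨Q v, hQ v⟩ = v - S v) (u : A†.domain) :
    (u : E) = ContinuousLinearMap.adjoint S u + ContinuousLinearMap.adjoint Q (A† u) := by
  refine hA.eq_of_inner_left 𝕜 fun v hv => ?_
  have hformal := adjoint_isFormalAdjoint hA u ⟨Q v, hQ ⟨v, hv⟩⟩
  rw [hAQ ⟨v, hv⟩] at hformal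
  rw [inner_add_left, ContinuousLinearMap.adjoint_inner_left,
    ContinuousLinearMap.adjoint_inner_left, hformal, inner_sub_right, add_sub_cancel]

end Adjoint

end LinearPMap

/-- **Essential self-adjointness from a parametrix.**
Let `H` be a complex Hilbert space and `A` a densely defined symmetric unbounded operator in `H`
with domain `D`. Suppose there are bounded operators `Q S : H →L[ℂ] H` such that
(i) `Q` maps `D` into `D` and `A (Q v) = v - S v` for `v ∈ D`;
(ii) `Q*` maps `D` into `D` and `v ↦ A (Q* v)` extends to a bounded operator `B`;
(iii) `S*` maps `D` into `D` and `v ↦ A (S* v)` extends to a bounded operator `C`.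
Then `A` is essentially self-adjoint: it is closable, its closure is self-adjoint,
and `A† = A.closure`. -/
theorem essentially_selfAdjoint_of_parametrix
    {H : Type*} [NormedAddCommGroup H] [InnerProductSpace ℂ H] [CompleteSpace H]
    (A : H →ₗ.[ℂ] H) (hdense : Dense (A.domain : Set H))
    (hsymm : ∀ u v : A.domain, ⟪A u, (v : H)⟫_ℂ = ⟪(u : H), A v⟫_ℂ)
    (Q S : H →L[ℂ] H)
    (hQ : ∀ v : A.domain, Q (v : H) ∈ A.domain)
    (hAQ : ∀ v : A.domain, A ⟨Q (v : H), hQ v⟩ = (v : H) - S (v : H))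
    (hQstar : ∀ v : A.domain, ContinuousLinearMap.adjoint Q (v : H) ∈ A.domain)
    (B : H →L[ℂ] H)
    (hB : ∀ v : A.domain, A ⟨ContinuousLinearMap.adjoint Q (v : H), hQstar v⟩ = B (v : H))
    (hSstar : ∀ v : A.domain, ContinuousLinearMap.adjoint S (v : H) ∈ A.domain)
    (C : H →L[ℂ] H)
    (hC : ∀ v : A.domain, A ⟨ContinuousLinearMap.adjoint S (v : H), hSstar v⟩ = C (v : H)) :
    A.IsClosable ∧ IsSelfAdjoint A.closure ∧ A.adjoint = A.closure := by
  have hclosable : A.IsClosable := LinearPMap.IsFormalAdjoint.isClosable hdense hsymm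
  have hle : A.closure ≤ A.adjoint := LinearPMap.IsFormalAdjoint.closure_le_adjoint hdense hsymm
  have hdomain : A.adjoint.domain ≤ A.closure.domain := fun u hu => by
    have hSu := hclosable.mem_graph_closure_of_dense hdense
      (ContinuousLinearMap.adjoint S).continuous C.continuous hSstar hC u
    have hQu := hclosable.mem_graph_closure_of_dense hdense
      (ContinuousLinearMap.adjoint Q).continuous B.continuous hQstar hB (A.adjoint ⟨u, hu⟩)
    have hsum := add_mem hSu hQu
    rw [Prod.mk_add_mk,
      ← LinearPMap.eq_adjoint_add_adjoint_of_parametrix hdense hQ hAQ ⟨u, hu⟩] at hsum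
    exact LinearPMap.mem_domain_of_mem_graph hsum
  have heq : A.adjoint = A.closure :=
    (LinearPMap.eq_of_le_of_domain_eq hle (le_antisymm hle.1 hdomain)).symm
  refine ⟨hclosable, ?_, heq⟩
  rw [LinearPMap.isSelfAdjoint_def, LinearPMap.adjoint_closure hdense, heq]
end

section
/- Let E be a complex Banach space and A a closable densely defined linear operator in E with domain D and closure A̅. Let Q, R : E → E be bounded linear operators such that Q(D) ⊆ D and R(D) ⊆ D, the operators D ∋ u ↦ A(Qu) and D ∋ u ↦ A(Ru) extend to bounded linear operators on E, and the parametrix identity u = Q(Au) + Ru holds for every u ∈ D. Then the domain of the closure is Dom A̅ = Q(E) + R(E), the sum of the ranges of Q and R. -/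
/-- **Domain of the closure via a parametrix.**
Let `E` be a complex Banach space and `A` a closable densely defined unbounded operator in `E`
with domain `D`. Let `Q R : E →L[ℂ] E` be bounded operators mapping `D` into `D` whose
compositions with `A` (i.e. `u ↦ A (Q u)` and `u ↦ A (R u)` on `D`) extend to bounded operators
on `E`, and suppose the parametrix identity `u = Q (A u) + R u` holds for all `u ∈ D`.
Then `Dom A.closure = Q(E) + R(E)`, the sum of the ranges of `Q` and `R`. -/
theorem domain_closure_eq_range_add_range
    {E : Type*} [NormedAddCommGroup E] [NormedSpace ℂ E] [CompleteSpace E]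
    (A : E →ₗ.[ℂ] E) (hdense : Dense (A.domain : Set E)) (hclos : A.IsClosable)
    (Q R : E →L[ℂ] E)
    (hQ : ∀ u : A.domain, Q (u : E) ∈ A.domain)
    (hR : ∀ u : A.domain, R (u : E) ∈ A.domain)
    (B : E →L[ℂ] E) (hB : ∀ u : A.domain, A ⟨Q (u : E), hQ u⟩ = B (u : E))
    (C : E →L[ℂ] E) (hC : ∀ u : A.domain, A ⟨R (u : E), hR u⟩ = C (u : E))
    (hparam : ∀ u : A.domain, (u : E) = Q (A u) + R (u : E)) :
    A.closure.domain
      = LinearMap.range (Q : E →ₗ[ℂ] E) ⊔ LinearMap.range (R : E →ₗ[ℂ] E) := by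
  have hgraph := hclos.graph_closure_eq_closure_graph
  apply le_antisymm
  · -- forward: any u in domain of closure lies in range Q ⊔ range R
    intro u hu
    obtain ⟨v, hv⟩ := LinearPMap.mem_domain_iff.mp hu
    rw [← hgraph] at hv
    have hv' : (u, v) ∈ closure (A.graph : Set (E × E)) := hv
    obtain ⟨x, hx, hlim⟩ := mem_closure_iff_seq_limit.mp hv'
    -- for each n, x n = (uₙ, A uₙ) with uₙ ∈ A.domain
    choose w hw1 hw2 using fun n => (A.mem_graph_iff.mp (hx n))
    have hkey : ∀ n, (x n).1 = Q (x n).2 + R (x n).1 := by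
      intro n
      have := hparam (w n)
      rw [hw1 n, hw2 n] at this
      exact this
    have h1 : Filter.Tendsto (fun n => (x n).1) Filter.atTop (nhds u) :=
      (continuous_fst.tendsto _).comp hlim
    have h2 : Filter.Tendsto (fun n => (x n).2) Filter.atTop (nhds v) :=
      (continuous_snd.tendsto _).comp hlim
    have h3 : Filter.Tendsto (fun n => Q (x n).2 + R (x n).1) Filter.atTop
        (nhds (Q v + R u)) :=
      ((Q.continuous.tendsto _).comp h2).add ((R.continuous.tendsto _).comp h1)
    have huv : u = Q v + R u := by
      refine tendsto_nhds_unique ?_ h3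
      simpa only [← hkey] using h1
    rw [huv]
    exact Submodule.add_mem_sup (LinearMap.mem_range_self _ v)
      (LinearMap.mem_range_self _ u)
  · -- backward direction
    refine sup_le ?_ ?_
    · rintro _ ⟨x, rfl⟩
      obtain ⟨s, hs, hslim⟩ := mem_closure_iff_seq_limit.mp (hdense x)
      rw [LinearPMap.mem_domain_iff]
      refine ⟨B x, ?_⟩
      rw [← hgraph]
      refine mem_closure_iff_seq_limit.mpr ⟨fun n => (Q (s n), B (s n)), ?_, ?_⟩
      · intro n
        exact A.mem_graph_iff.mpr ⟨⟨Q (s n), hQ ⟨s n, hs n⟩⟩, rfl, hB ⟨s n, hs n⟩⟩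
      · exact (((Q.continuous.tendsto _).comp hslim).prodMk_nhds
          ((B.continuous.tendsto _).comp hslim))
    · rintro _ ⟨x, rfl⟩
      obtain ⟨s, hs, hslim⟩ := mem_closure_iff_seq_limit.mp (hdense x)
      rw [LinearPMap.mem_domain_iff]
      refine ⟨C x, ?_⟩
      rw [← hgraph]
      refine mem_closure_iff_seq_limit.mpr ⟨fun n => (R (s n), C (s n)), ?_, ?_⟩
      · intro n
        exact A.mem_graph_iff.mpr ⟨⟨R (s n), hR ⟨s n, hs n⟩⟩, rfl, hC ⟨s n, hs n⟩⟩
      · exact (((R.continuous.tendsto _).comp hslim).prodMk_nhds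
          ((C.continuous.tendsto _).comp hslim))
end

section
/- Let E be a complex Banach space and A a closable densely defined linear operator in E with domain D and closure A̅. Let Q, R : E → E be bounded linear operators such that Q(D) ⊆ D and R(D) ⊆ D, let B and C be bounded linear operators on E extending D ∋ u ↦ A(Qu) and D ∋ u ↦ A(Ru) respectively, and assume u = Q(Au) + Ru for every u ∈ D. Then the graph of A̅ admits the parametrization G(A̅) = {(Qx + Ry, Bx + Cy) : x, y ∈ E}; that is, the graph of A̅ is the image of the bounded operator on E ⊕ E given by the matrix with rows (Q, R) and (B, C). -/
/-!
The block operator `S (x, y) = (Q x + R y, B x + C y)` maps `D × D` into the graph of `A`, so by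
density and continuity its range lies in the closed graph of `A̅`. Conversely, the continuous
condition `S (v, u) = (u, v)` holds on the graph of `A` — its second component
`B (A u) + C u = A u` because `(u, B (A u) + C u) = S (A u, u)` and `(u, A u)` both lie in the
graph of the single-valued `A̅` — hence on its closure, which exhibits every `(u, v) ∈ G(A̅)` as a
value of `S`.
-/

namespace LinearPMap

theorem block_apply_mem_graph {𝕜 E F : Type*} [Ring 𝕜] [AddCommGroup E] [Module 𝕜 E]
    [AddCommGroup F] [Module 𝕜 F] {A : E →ₗ.[𝕜] F} {Q R : E →ₗ[𝕜] E} {B C : E →ₗ[𝕜] F}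
    (hQ : ∀ u : A.domain, Q (u : E) ∈ A.domain) (hR : ∀ u : A.domain, R (u : E) ∈ A.domain)
    (hB : ∀ u : A.domain, A ⟨Q (u : E), hQ u⟩ = B (u : E))
    (hC : ∀ u : A.domain, A ⟨R (u : E), hR u⟩ = C (u : E)) {x y : E} (hx : x ∈ A.domain)
    (hy : y ∈ A.domain) : (Q x + R y, B x + C y) ∈ A.graph := by
  have hsum := A.graph.add_mem (A.mem_graph ⟨Q x, hQ ⟨x, hx⟩⟩) (A.mem_graph ⟨R y, hR ⟨y, hy⟩⟩)
  rwa [Prod.mk_add_mk, hB ⟨x, hx⟩, hC ⟨y, hy⟩] at hsum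

variable {𝕜 E F : Type*} [CommRing 𝕜] [TopologicalSpace 𝕜]
  [AddCommGroup E] [Module 𝕜 E] [TopologicalSpace E] [ContinuousAdd E] [ContinuousSMul 𝕜 E]
  [AddCommGroup F] [Module 𝕜 F] [TopologicalSpace F] [ContinuousAdd F] [ContinuousSMul 𝕜 F]
  {f : E →ₗ.[𝕜] F}

theorem IsClosable.closure_graph_subset {t : Set (E × F)} (hf : f.IsClosable)
    (ht : _root_.IsClosed t) (h : (f.graph : Set (E × F)) ⊆ t) :
    (f.closure.graph : Set (E × F)) ⊆ t := by
  rw [← hf.graph_closure_eq_closure_graph, Submodule.topologicalClosure_coe]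
  exact closure_minimal h ht

theorem IsClosable.mem_closure_graph_of_dense {X : Type*} [TopologicalSpace X] {S : X → E × F}
    {s : Set X} (hf : f.IsClosable) (hS : Continuous S) (hs : Dense s)
    (h : ∀ x ∈ s, S x ∈ f.graph) (x : X) : S x ∈ f.closure.graph := by
  have himage : S '' s ⊆ f.closure.graph := by
    rintro _ ⟨y, hy, rfl⟩
    exact le_graph_of_le f.le_closure (h y hy)
  exact closure_minimal himage hf.closure_isClosed
    (hS.range_subset_closure_image_dense hs ⟨x, rfl⟩)

end LinearPMap

theorem graph_closure_eq_range_block_general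
    {E : Type*} [NormedAddCommGroup E] [NormedSpace ℂ E]
    (A : E →ₗ.[ℂ] E) (hdense : Dense (A.domain : Set E)) (hclos : A.IsClosable)
    (Q R : E →L[ℂ] E)
    (hQ : ∀ u : A.domain, Q (u : E) ∈ A.domain)
    (hR : ∀ u : A.domain, R (u : E) ∈ A.domain)
    (B : E →L[ℂ] E) (hB : ∀ u : A.domain, A ⟨Q (u : E), hQ u⟩ = B (u : E))
    (C : E →L[ℂ] E) (hC : ∀ u : A.domain, A ⟨R (u : E), hR u⟩ = C (u : E))
    (hparam : ∀ u : A.domain, (u : E) = Q (A u) + R (u : E)) :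
    A.closure.graph
      = LinearMap.range
          (((Q : E →ₗ[ℂ] E).coprod (R : E →ₗ[ℂ] E)).prod
            ((B : E →ₗ[ℂ] E).coprod (C : E →ₗ[ℂ] E))) := by
  set S : E × E →L[ℂ] E × E := (Q.coprod R).prod (B.coprod C)
  have hrange : ∀ p, S p ∈ A.closure.graph :=
    hclos.mem_closure_graph_of_dense S.continuous (hdense.prod hdense)
      fun p hp => LinearPMap.block_apply_mem_graph (Q := Q) (R := R) (B := B) (C := C)
        hQ hR hB hC hp.1 hp.2
  have hsnd (u : A.domain) : B (A u) + C (u : E) = A u := by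
    have hSu : S (A u, u) = ((u : E), B (A u) + C (u : E)) := Prod.ext (hparam u).symm rfl
    exact A.closure.mem_graph_snd_inj (hSu ▸ hrange (A u, u))
      (A.le_graph_of_le A.le_closure (A.mem_graph u)) rfl
  have hfix : (A.closure.graph : Set (E × E)) ⊆ {p | S p.swap = p} := by
    refine hclos.closure_graph_subset (isClosed_eq (S.continuous.comp continuous_swap)
      continuous_id) ?_
    intro p hp
    obtain ⟨u, rfl⟩ := A.mem_graph_iff'.1 hp
    simp [S, ← hparam u, hsnd u]
  apply le_antisymm
  · exact fun p hp => ⟨p.swap, hfix hp⟩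
  · rintro _ ⟨p, rfl⟩
    exact hrange p

/-- **Parametrization of the graph of the closure.**
Let `E` be a complex Banach space and `A` a closable densely defined unbounded operator in `E`
with domain `D`. Let `Q R : E →L[ℂ] E` map `D` into `D`, let `B` and `C` be bounded operators
extending `D ∋ u ↦ A (Q u)` and `D ∋ u ↦ A (R u)` respectively, and assume
`u = Q (A u) + R u` for `u ∈ D`. Then the graph of `A.closure` is
`{(Q x + R y, B x + C y) : x y ∈ E}`, i.e. the range of the block operator
`(x, y) ↦ (Q x + R y, B x + C y)` on `E × E`. -/
theorem graph_closure_eq_range_block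
    {E : Type*} [NormedAddCommGroup E] [NormedSpace ℂ E] [CompleteSpace E]
    (A : E →ₗ.[ℂ] E) (hdense : Dense (A.domain : Set E)) (hclos : A.IsClosable)
    (Q R : E →L[ℂ] E)
    (hQ : ∀ u : A.domain, Q (u : E) ∈ A.domain)
    (hR : ∀ u : A.domain, R (u : E) ∈ A.domain)
    (B : E →L[ℂ] E) (hB : ∀ u : A.domain, A ⟨Q (u : E), hQ u⟩ = B (u : E))
    (C : E →L[ℂ] E) (hC : ∀ u : A.domain, A ⟨R (u : E), hR u⟩ = C (u : E))
    (hparam : ∀ u : A.domain, (u : E) = Q (A u) + R (u : E)) :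
    A.closure.graph
      = LinearMap.range
          (((Q : E →ₗ[ℂ] E).coprod (R : E →ₗ[ℂ] E)).prod
            ((B : E →ₗ[ℂ] E).coprod (C : E →ₗ[ℂ] E))) :=
  graph_closure_eq_range_block_general A hdense hclos Q R hQ hR B hB C hC hparam
end
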